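/- Let U ∈ B(X) and V ∈ B(Y) be bounded operators on Banach spaces. If U and V are equivalent after one-sided extension, then they are Schur coupled. -/
import Mathlib


open ContinuousLinearMap

universe u

variable {X Y : Type u} [NormedAddCommGroup X] [NormedSpace ℂ X]
  [NormedAddCommGroup Y] [NormedSpace ℂ Y]

/-- A witness that `U = E (V ⊕ I_{Y₀}) F` with `E`, `F` invertible: the extension
is on the side of `V` only. -/
structure EAOEWitnessLeft (U : X →L[ℂ] X) (V : Y →L[ℂ] Y) : Type (u + 1) where
  Y₀ : Type u
  [instN : NormedAddCommGroup Y₀]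
  [instS : NormedSpace ℂ Y₀]
  [instC : CompleteSpace Y₀]
  E : (Y × Y₀) ≃L[ℂ] X
  F : X ≃L[ℂ] (Y × Y₀)
  eq : U = (E : (Y × Y₀) →L[ℂ] X) ∘L
    (V.prodMap (ContinuousLinearMap.id ℂ Y₀)) ∘L (F : X →L[ℂ] (Y × Y₀))

/-- A witness that `U ⊕ I_{X₀} = E V F` with `E`, `F` invertible: the extension
is on the side of `U` only. -/
structure EAOEWitnessRight (U : X →L[ℂ] X) (V : Y →L[ℂ] Y) : Type (u + 1) where
  X₀ : Type u
  [instN : NormedAddCommGroup X₀]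
  [instS : NormedSpace ℂ X₀]
  [instC : CompleteSpace X₀]
  E : Y ≃L[ℂ] (X × X₀)
  F : (X × X₀) ≃L[ℂ] Y
  eq : U.prodMap (ContinuousLinearMap.id ℂ X₀) =
    (E : Y →L[ℂ] (X × X₀)) ∘L V ∘L (F : (X × X₀) →L[ℂ] Y)

/-- `U` and `V` are *equivalent after one-sided extension*. -/
def EAOE (U : X →L[ℂ] X) (V : Y →L[ℂ] Y) : Prop :=
  Nonempty (EAOEWitnessLeft U V) ∨ Nonempty (EAOEWitnessRight U V)

/-- `U` and `V` are *Schur coupled* if they arise as the two Schur complements of a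
`2 × 2` block operator on `X × Y` with invertible diagonal entries. -/
def SchurCoupled (U : X →L[ℂ] X) (V : Y →L[ℂ] Y) : Prop :=
  ∃ (A : X ≃L[ℂ] X) (D : Y ≃L[ℂ] Y) (B : Y →L[ℂ] X) (C : X →L[ℂ] Y),
    U = (A : X →L[ℂ] X) - B ∘L (D.symm : Y →L[ℂ] Y) ∘L C ∧
    V = (D : Y →L[ℂ] Y) - C ∘L (A.symm : X →L[ℂ] X) ∘L B

lemma schurCoupled_symm {U : X →L[ℂ] X} {V : Y →L[ℂ] Y}
    (h : SchurCoupled U V) : SchurCoupled V U := by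
  obtain ⟨A, D, B, C, h1, h2⟩ := h
  exact ⟨D, A, C, B, h2, h1⟩

lemma eaoeLeft_schurCoupled (U : X →L[ℂ] X) (V : Y →L[ℂ] Y)
    (w : EAOEWitnessLeft U V) : SchurCoupled U V := by
  letI := w.instN
  letI := w.instS
  refine ⟨w.F.trans w.E, ContinuousLinearEquiv.refl ℂ Y,
    (w.E : (Y × w.Y₀) →L[ℂ] X) ∘L (ContinuousLinearMap.inl ℂ Y w.Y₀) ∘L
      (ContinuousLinearMap.id ℂ Y - V),
    (ContinuousLinearMap.fst ℂ Y w.Y₀) ∘L (w.F : X →L[ℂ] (Y × w.Y₀)), ?_, ?_⟩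
  · conv_lhs => rw [w.eq]
    ext x
    simp [Prod.ext_iff, ← map_sub]
  · ext y
    simp

theorem eaoe_implies_schurCoupled
    {X Y : Type u} [NormedAddCommGroup X] [NormedSpace ℂ X] [CompleteSpace X]
    [NormedAddCommGroup Y] [NormedSpace ℂ Y] [CompleteSpace Y]
    (U : X →L[ℂ] X) (V : Y →L[ℂ] Y) (h : EAOE U V) : SchurCoupled U V := by
  rcases h with ⟨⟨w⟩⟩ | ⟨⟨w⟩⟩
  · exact eaoeLeft_schurCoupled U V w
  · letI := w.instN
    letI := w.instS
    letI := w.instC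
    refine schurCoupled_symm (eaoeLeft_schurCoupled V U
      ⟨w.X₀, w.E.symm, w.F.symm, ?_⟩)
    have h2 := w.eq
    ext y
    have h3 := congrArg (fun (T : (X × w.X₀) →L[ℂ] (X × w.X₀)) =>
      w.E.symm (T (w.F.symm y))) h2
    simpa using h3.symm
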